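/- arXiv:1802.07040 — 3 statements merged into one kernel-verified Lean document; each statement's English description precedes it below -/
import Mathlib

section
/- Let a > 0 and ω ∈ ℝ, and set h = −a²ω²/((1−a)(−ω²) + 2jω + 1) (assuming the denominator (1−a)(jω)² + 2jω + 1 ≠ 0). Define z = exp(j·arctan(1/ω)) for ω ≠ 0. If a complex number F satisfies |(2/a)·F − z| ≤ 1, then F' := (F + h)/(F + h + 1) is well-defined (F + h + 1 ≠ 0) and satisfies |(2/a)·F' − z| ≤ 1. -/
/-!
Put `c = a z`, so `|c| = a`. The disc `|(2/a) w - z| ≤ 1` is the disc with diameter `[0, c]`,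
i.e. `|w|² ≤ Re (c̄ w)`, and `G / (G + 1)` lies in it iff `(1 - Re c) |G|² ≤ Re (c̄ G)`.
This weaker condition passes from `F` to `F + h` as soon as `1 - Re c ≤ Re c · Re (c / h)`,
because `Re c` times its slack is at least `|Re c · F - (1 - Re c) h|²`.
With `t = 1/ω` one has `z = (1 + t i) / √(1 + t²)` and `h = -a² / ((t + i)² + a)`, and the
last condition reduces to `√(1 + t²) ≥ 1`.
-/

open Complex ComplexConjugate

section DiscWithDiameter

variable {c G : ℂ}

theorem norm_two_div_mul_sub_le_one_iff {a : ℝ} (ha : 0 < a) {z : ℂ} (hz : ‖z‖ = 1) (w : ℂ) :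
    ‖2 / (a : ℂ) * w - z‖ ≤ 1 ↔ normSq w ≤ (conj (a * z) * w).re := by
  have hz' : z.re ^ 2 + z.im ^ 2 = 1 := by
    rw [← one_pow 2, ← hz, ← normSq_eq_norm_sq, normSq_apply]; ring
  have key : 1 - normSq (2 / (a : ℂ) * w - z) = 4 / a ^ 2 * ((conj (a * z) * w).re - normSq w) := by
    simp only [normSq_apply, sub_re, sub_im, mul_re, mul_im, conj_re, conj_im, div_re, div_im,
      ofReal_re, ofReal_im, re_ofNat, im_ofNat, mul_zero, zero_mul, add_zero, sub_zero, zero_div]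
    field_simp
    linear_combination (-a ^ 2) * hz'
  rw [← sq_le_one_iff₀ (norm_nonneg _), ← normSq_eq_norm_sq, ← sub_nonneg, key,
    mul_nonneg_iff_of_pos_left (by positivity), sub_nonneg]

theorem normSq_div_add_one_le_iff (hG : G + 1 ≠ 0) :
    normSq (G / (G + 1)) ≤ (conj c * (G / (G + 1))).re ↔
      (1 - c.re) * normSq G ≤ (conj c * G).re := by
  have hN : 0 < normSq (G + 1) := normSq_pos.mpr hG
  have hre : (conj c * (G / (G + 1))).re
      = (c.re * normSq G + (conj c * G).re) / normSq (G + 1) := by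
    rw [mul_div_assoc', div_re, ← add_div]
    congr 1
    simp only [normSq_apply, mul_re, mul_im, conj_re, conj_im, add_re, add_im, one_re, one_im]
    ring
  rw [normSq_div, hre, div_le_div_iff_of_pos_right hN]
  constructor <;> intro h <;> linarith

theorem add_one_ne_zero_of_one_sub_re_mul_normSq_le
    (hG : (1 - c.re) * normSq G ≤ (conj c * G).re) : G + 1 ≠ 0 := by
  rintro hG1
  rw [eq_neg_of_add_eq_zero_left hG1] at hG
  simp only [normSq_neg, map_one, mul_one, mul_neg, neg_re, conj_re, tsub_le_iff_right,
    neg_add_cancel] at hG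
  linarith

theorem re_conj_mul_eq_normSq_mul_re_div (c h : ℂ) :
    (conj c * h).re = normSq h * (c / h).re := by
  rcases eq_or_ne h 0 with rfl | hh
  · simp
  · rw [div_re, ← add_div, mul_div_cancel₀ _ (normSq_pos.mpr hh).ne']
    simp only [mul_re, conj_re, conj_im]
    ring

theorem one_sub_re_mul_normSq_add_le (hc : 0 < c.re) {F h : ℂ}
    (hF : normSq F ≤ (conj c * F).re) (hh : 1 - c.re ≤ c.re * (c / h).re) :
    (1 - c.re) * normSq (F + h) ≤ (conj c * (F + h)).re := by
  have hh' : (1 - c.re) * normSq h ≤ c.re * (conj c * h).re := by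
    rw [re_conj_mul_eq_normSq_mul_re_div, mul_left_comm, mul_comm (1 - c.re)]
    exact mul_le_mul_of_nonneg_left hh (normSq_nonneg h)
  have hsq := normSq_nonneg (c.re * F - (1 - c.re) * h)
  simp only [normSq_apply, mul_re, mul_im, add_re, add_im, sub_re, sub_im, conj_re, conj_im,
    ofReal_re, ofReal_im, one_re, one_im] at hF hh' hsq ⊢
  nlinarith

end DiscWithDiameter

noncomputable def loopGain (a : ℝ) (s : ℂ) : ℂ := a ^ 2 * s ^ 2 / ((1 - a) * s ^ 2 + 2 * s + 1)

theorem loopGain_I_mul_ofReal (a : ℝ) {ω : ℝ} (hω : ω ≠ 0) :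
    loopGain a (I * ω) = -a ^ 2 / ((((1 / ω : ℝ) : ℂ) + I) ^ 2 + a) := by
  have hω' : (ω : ℂ) ≠ 0 := ofReal_ne_zero.mpr hω
  have hden : (((1 / ω : ℝ) : ℂ) + I) ^ 2 + a
      = ((1 - a) * (I * ω) ^ 2 + 2 * (I * ω) + 1) / (ω : ℂ) ^ 2 := by
    rw [mul_pow, I_sq]
    push_cast
    field_simp
    linear_combination (ω : ℂ) ^ 2 * I_sq
  rw [loopGain, hden, div_div_eq_mul_div, mul_pow, I_sq]
  ring

theorem exp_I_mul_arctan (t : ℝ) : exp (I * Real.arctan t) = (1 + t * I) / √(1 + t ^ 2) := by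
  rw [mul_comm, exp_mul_I, ← ofReal_cos, ← ofReal_sin, Real.cos_arctan, Real.sin_arctan]
  push_cast
  ring

section ArctanPhase

variable {a t : ℝ} {z : ℂ} (hz : z = (1 + t * I) / √(1 + t ^ 2))
include hz

theorem re_ofReal_mul_eq_div_sqrt : ((a : ℂ) * z).re = a / √(1 + t ^ 2) := by
  rw [hz, re_ofReal_mul, div_ofReal_re, add_re, one_re, re_ofReal_mul, I_re, mul_zero, add_zero,
    mul_one_div]

theorem one_sub_re_le_re_mul_re_div (ha : 0 < a) :
    1 - ((a : ℂ) * z).re ≤ ((a : ℂ) * z).re * ((a : ℂ) * z / (-a ^ 2 / ((t + I) ^ 2 + a))).re := by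
  set r := √(1 + t ^ 2)
  have hr2 : r ^ 2 = 1 + t ^ 2 := Real.sq_sqrt (by positivity)
  have hr1 : 1 ≤ r := Real.one_le_sqrt.mpr (le_add_of_nonneg_right (sq_nonneg t))
  have hdiv : (a : ℂ) * z / (-a ^ 2 / ((t + I) ^ 2 + a))
      = -((1 + t * I) * ((t + I) ^ 2 + a)) / ((a * r : ℝ) : ℂ) := by
    rw [hz]
    push_cast
    field_simp
  have hre : ((a : ℂ) * z / (-a ^ 2 / ((t + I) ^ 2 + a))).re = (r ^ 2 - a) / (a * r) := by
    rw [hdiv, div_ofReal_re]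
    simp only [sq, neg_re, mul_re, add_re, one_re, ofReal_re, I_re, mul_zero, ofReal_im, I_im,
      mul_one, sub_self, add_zero, add_im, zero_add, one_mul, one_im, mul_im, neg_sub]
    linear_combination (-(a⁻¹ * r⁻¹)) * hr2
  have hr0 : 0 < r := by linarith
  have hcancel : a / r * ((r ^ 2 - a) / (a * r)) = 1 - a / r ^ 2 := by
    field_simp
  rw [re_ofReal_mul_eq_div_sqrt hz, hre, hcancel, sub_le_sub_iff_left]
  exact div_le_div_of_nonneg_left ha.le hr0 (by nlinarith)

end ArctanPhase

theorem stmt1_general (a ω : ℝ) (ha : 0 < a) (hω : ω ≠ 0)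
    (h : ℂ)
    (hh : h = (a : ℂ) ^ 2 * (Complex.I * ω) ^ 2 /
      ((1 - (a : ℂ)) * (Complex.I * ω) ^ 2 + 2 * (Complex.I * ω) + 1))
    (z : ℂ) (hz : z = Complex.exp (Complex.I * (Real.arctan (1 / ω) : ℝ)))
    (F : ℂ) (hF : ‖(2 / (a : ℂ)) * F - z‖ ≤ 1) :
    F + h + 1 ≠ 0 ∧
      ‖(2 / (a : ℂ)) * ((F + h) / (F + h + 1)) - z‖ ≤ 1 := by
  have hz_norm : ‖z‖ = 1 := hz ▸ norm_exp_I_mul_ofReal _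
  have hz_alg : z = (1 + (1 / ω : ℝ) * I) / √(1 + (1 / ω) ^ 2) := by
    rw [hz, exp_I_mul_arctan]
  have hh' : h = -a ^ 2 / ((((1 / ω : ℝ) : ℂ) + I) ^ 2 + a) :=
    hh.trans (loopGain_I_mul_ofReal a hω)
  have hc : 0 < ((a : ℂ) * z).re := by
    rw [re_ofReal_mul_eq_div_sqrt hz_alg]
    positivity
  have hFh := one_sub_re_mul_normSq_add_le hc
    ((norm_two_div_mul_sub_le_one_iff ha hz_norm F).mp hF)
    (hh' ▸ one_sub_re_le_re_mul_re_div hz_alg ha)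
  have hne := add_one_ne_zero_of_one_sub_re_mul_normSq_le hFh
  exact ⟨hne, (norm_two_div_mul_sub_le_one_iff ha hz_norm _).mpr
    ((normSq_div_add_one_le_iff hne).mpr hFh)⟩

theorem stmt1 (a ω : ℝ) (ha : 0 < a) (hω : ω ≠ 0)
    (hd : (1 - (a : ℂ)) * (Complex.I * ω) ^ 2 + 2 * (Complex.I * ω) + 1 ≠ 0)
    (h : ℂ)
    (hh : h = (a : ℂ) ^ 2 * (Complex.I * ω) ^ 2 /
      ((1 - (a : ℂ)) * (Complex.I * ω) ^ 2 + 2 * (Complex.I * ω) + 1))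
    (z : ℂ) (hz : z = Complex.exp (Complex.I * (Real.arctan (1 / ω) : ℝ)))
    (F : ℂ) (hF : ‖(2 / (a : ℂ)) * F - z‖ ≤ 1) :
    F + h + 1 ≠ 0 ∧
      ‖(2 / (a : ℂ)) * ((F + h) / (F + h + 1)) - z‖ ≤ 1 :=
  stmt1_general a ω ha hω h hh z hz F hF
end

section
/- Let a > 0, ω ∈ ℝ, ω ≠ 0, t = arctan(1/ω), and y = ω⁴(−a² + a − 1) + aω⁴·sec t − 2ω³·tan t + ω². Assume y < 0. Then Δ := 2a·cos t·(−1 − ω⁴(a − sec t)²/y) satisfies Δ ≤ 0 when cos t > 0. -/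
/-!
With `s = sec t` one has `tan t = 1 / ω` and `s ^ 2 = 1 + 1 / ω ^ 2`, which turns `-y` into
`ω⁴ (a - s)² + a ω⁴ (s - 1)`. Since `s ≥ 1`, this gives `ω⁴ (a - s)² ≤ -y`, so the bracket in `Δ`
is non-positive, while its prefactor `2 a cos t` is non-negative.
-/

open Real

lemma one_div_cos_sq_eq_one_add_tan_sq {t : ℝ} (hc : cos t ≠ 0) :
    (1 / cos t) ^ 2 = 1 + tan t ^ 2 := by
  rw [one_div, inv_pow, ← inv_one_add_tan_sq hc, inv_inv]

lemma one_le_one_div_cos {t : ℝ} (hc : 0 < cos t) : 1 ≤ 1 / cos t := by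
  rw [le_div_iff₀ hc, one_mul]
  exact cos_le_one t

lemma neg_sub_sq_eq_of_sq_eq (a ω s : ℝ) (hs : s ^ 2 = 1 + (1 / ω) ^ 2) :
    -(ω ^ 4 * (-a ^ 2 + a - 1) + a * ω ^ 4 * s - 2 * ω ^ 3 * (1 / ω) + ω ^ 2)
      - ω ^ 4 * (a - s) ^ 2 = a * ω ^ 4 * (s - 1) := by
  -- both identities also hold at `ω = 0`, where `1 / ω = 0`
  obtain ⟨hcube, hquart⟩ : ω ^ 3 * (1 / ω) = ω ^ 2 ∧ ω ^ 4 * (1 / ω) ^ 2 = ω ^ 2 := by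
    rcases eq_or_ne ω 0 with rfl | hω
    · simp
    · constructor <;> field_simp
  linear_combination 2 * hcube - ω ^ 4 * hs - hquart

lemma neg_one_sub_div_nonpos {u y : ℝ} (hy : y < 0) (h : u ≤ -y) : -1 - u / y ≤ 0 := by
  rw [sub_nonpos, le_div_iff_of_neg hy]
  linarith

theorem stmt6_general (a ω : ℝ) (ha : 0 < a) (t : ℝ)
    (ht : t = Real.arctan (1 / ω))
    (y : ℝ)
    (hy : y = ω ^ 4 * (-a ^ 2 + a - 1) + a * ω ^ 4 * (1 / Real.cos t)
      - 2 * ω ^ 3 * Real.tan t + ω ^ 2)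
    (hyneg : y < 0) (hcos : 0 < Real.cos t) :
    2 * a * Real.cos t * (-1 - ω ^ 4 * (a - 1 / Real.cos t) ^ 2 / y) ≤ 0 := by
  have htan : tan t = 1 / ω := by rw [ht, tan_arctan]
  have hsec_sq : (1 / cos t) ^ 2 = 1 + (1 / ω) ^ 2 := by
    rw [one_div_cos_sq_eq_one_add_tan_sq hcos.ne', htan]
  have hgap := neg_sub_sq_eq_of_sq_eq a ω _ hsec_sq
  rw [← htan, ← hy] at hgap
  have hslack : 0 ≤ a * ω ^ 4 * (1 / cos t - 1) := by
    have : 0 ≤ 1 / cos t - 1 := sub_nonneg.mpr (one_le_one_div_cos hcos)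
    positivity
  exact mul_nonpos_of_nonneg_of_nonpos (by positivity)
    (neg_one_sub_div_nonpos hyneg (by linarith))

theorem stmt6 (a ω : ℝ) (ha : 0 < a) (hω : ω ≠ 0) (t : ℝ)
    (ht : t = Real.arctan (1 / ω))
    (y : ℝ)
    (hy : y = ω ^ 4 * (-a ^ 2 + a - 1) + a * ω ^ 4 * (1 / Real.cos t)
      - 2 * ω ^ 3 * Real.tan t + ω ^ 2)
    (hyneg : y < 0) (hcos : 0 < Real.cos t) :
    2 * a * Real.cos t * (-1 - ω ^ 4 * (a - 1 / Real.cos t) ^ 2 / y) ≤ 0 :=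
  stmt6_general a ω ha t ht y hy hyneg hcos
end

section
/- Let a > 0 and h(s) = a²s²/((1−a)s² + 2s + 1). Then for every s in the closed right half plane {s ∈ ℂ : Re s ≥ 0} for which the denominator is nonzero, h(s) is not a real number in the open interval (−4, 0). -/
/-!
Clearing the denominator, `h(s) = r` becomes the real quadratic equation
`(a² + r a - r) s² - 2 r s - r = 0`. For `-4 < r < 0` all three coefficients are positive
(the leading one because its discriminant in `a` is `r (r + 4) < 0`), and a real quadratic
with positive coefficients has both roots in the open left half plane.
-/

open Complex

theorem quadratic_ne_zero_of_re_nonneg {A B C : ℝ} (hA : 0 ≤ A) (hB : 0 < B) (hC : 0 < C)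
    {s : ℂ} (hs : 0 ≤ s.re) : (A : ℂ) * s ^ 2 + B * s + C ≠ 0 := by
  intro hroot
  have hre := congrArg re hroot
  have him := congrArg im hroot
  simp only [pow_two, mul_re, mul_im, add_re, add_im, ofReal_re, ofReal_im, zero_mul, sub_zero,
    add_zero, zero_re, zero_im] at hre him
  -- the imaginary part is `s.im * (2 A s.re + B)`, whose second factor is positive
  have him_eq : s.im = 0 := by
    have hfactor : s.im * (2 * A * s.re + B) = 0 := by linarith
    have hpos : 0 < 2 * A * s.re + B := by positivity
    simpa [hpos.ne'] using hfactor
  rw [him_eq] at hre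
  nlinarith [mul_nonneg (mul_nonneg hA hs) hs, mul_nonneg hB.le hs]

theorem sq_add_mul_sub_pos (a : ℝ) {r : ℝ} (hr : r ∈ Set.Ioo (-4 : ℝ) 0) :
    0 < a ^ 2 + r * a - r := by
  obtain ⟨hr4, hr0⟩ := hr
  nlinarith [sq_nonneg (2 * a + r), mul_pos (neg_pos.mpr hr0) (neg_lt_iff_pos_add.mp hr4)]

theorem stmt7_general (a : ℝ) :
    ∀ s : ℂ, 0 ≤ s.re →
      (1 - (a : ℂ)) * s ^ 2 + 2 * s + 1 ≠ 0 →
      ∀ r : ℝ, r ∈ Set.Ioo (-4 : ℝ) 0 →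
        (a : ℂ) ^ 2 * s ^ 2 / ((1 - (a : ℂ)) * s ^ 2 + 2 * s + 1) ≠ (r : ℂ) := by
  intro s hs hden r hr heq
  rw [div_eq_iff hden] at heq
  have hB : 0 < -(2 * r) := by linarith [hr.2]
  apply quadratic_ne_zero_of_re_nonneg (sq_add_mul_sub_pos a hr).le hB (neg_pos.mpr hr.2) hs
  push_cast
  linear_combination heq

theorem stmt7 (a : ℝ) (ha : 0 < a) :
    ∀ s : ℂ, 0 ≤ s.re →
      (1 - (a : ℂ)) * s ^ 2 + 2 * s + 1 ≠ 0 →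
      ∀ r : ℝ, r ∈ Set.Ioo (-4 : ℝ) 0 →
        (a : ℂ) ^ 2 * s ^ 2 / ((1 - (a : ℂ)) * s ^ 2 + 2 * s + 1) ≠ (r : ℂ) :=
  stmt7_general a
end
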